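/- For every graph G of order n, the PSD propagation time satisfies pt_+(G) ≤ ⌈(n − Z_+(G))/2⌉ ≤ ⌈(n−1)/2⌉ ≤ n/2. -/

import Mathlib

open SimpleGraph Set

variable {V : Type*}

/-- The subgraph of `G` obtained by deleting the vertices of `B`
(kept as isolated vertices). -/
def delVerts (G : SimpleGraph V) (B : Set V) : SimpleGraph V where
  Adj a b := G.Adj a b ∧ a ∉ B ∧ b ∉ B
  symm := ⟨fun _ _ ⟨h, ha, hb⟩ => ⟨h.symm, hb, ha⟩⟩
  loopless := ⟨fun a ⟨h, _, _⟩ => G.loopless.irrefl a h⟩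

/-- `u` may PSD-force `w` when the set of blue vertices is `B`:  `u` is blue, `w` is a white
neighbor of `u`, and `w` is the unique white neighbor of `u` in the component of `G - B`
containing `w`. -/
def PSDForce (G : SimpleGraph V) (B : Set V) (u w : V) : Prop :=
  u ∈ B ∧ w ∉ B ∧ G.Adj u w ∧
    ∀ x, G.Adj u x → x ∉ B → (delVerts G B).Reachable x w → x = w

/-- One round of simultaneous PSD forcing starting from blue set `B`. -/
def psdStep (G : SimpleGraph V) (B : Set V) : Set V :=
  B ∪ {w | ∃ u, PSDForce G B u w}

/-- `B` is a PSD forcing set of `G`. -/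
def IsPSDForcingSet (G : SimpleGraph V) (B : Set V) : Prop :=
  ∃ t, (psdStep G)^[t] B = Set.univ

/-- The PSD propagation time `pt_+(G; B)` of the set `B` in `G`. -/
noncomputable def psdPropTime (G : SimpleGraph V) (B : Set V) : ℕ :=
  sInf {t | (psdStep G)^[t] B = Set.univ}

/-- The PSD zero forcing number `Z_+(G)`. -/
noncomputable def psdZ (G : SimpleGraph V) : ℕ :=
  sInf {k | ∃ B : Set V, IsPSDForcingSet G B ∧ B.ncard = k}

/-- The `k`-PSD propagation time `pt_+(G, k)`: the minimum of `pt_+(G; B)` over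
PSD forcing sets `B` of size `k`. -/
noncomputable def psdPt (G : SimpleGraph V) (k : ℕ) : ℕ :=
  sInf {t | ∃ B : Set V, IsPSDForcingSet G B ∧ B.ncard = k ∧ psdPropTime G B = t}

/-- The PSD propagation time `pt_+(G) = pt_+(G, Z_+(G))`. -/
noncomputable def psdPtG (G : SimpleGraph V) : ℕ := psdPt G (psdZ G)

/-- The PSD propagation time of `B` within the induced subgraph `G[U]` (for `B ⊆ U`),
realized by making the vertices outside `U` isolated and initially blue. -/
noncomputable def psdPropTimeOn (G : SimpleGraph V) (U B : Set V) : ℕ :=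
  psdPropTime (delVerts G Uᶜ) (B ∪ Uᶜ)

/-- The vertex set of the component of `G - B` containing the white vertex `w`. -/
def compOf (G : SimpleGraph V) (B : Set V) (w : V) : Set V :=
  {x | x ∉ B ∧ (delVerts G B).Reachable x w}

/-!
If `B` is a PSD forcing set, every white component `C` of `G - B` has a vertex `w` that is the
only neighbor in `C` of some blue vertex `u` (otherwise no vertex of `C` is ever forced), and `u`
forces `w` at once. Once `w` is blue, `C \ {w}` splits into smaller components, so every white
vertex is blue after `|C|` rounds.

Exchanging `u` and `w` gives a PSD forcing set `B'` of the same size, since `w` forces `u` back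
in one round. The white components of `G - B'` either lie in `C \ {w}`, or in the other
components of `G - B` together with `u`, which have at most `n - |B| - |C| + 1` vertices. So as long
as some component has more than `⌈(n - |B|)/2⌉` vertices, an exchange lowers the largest component
size, and some minimum PSD forcing set has all white components of size at most `⌈(n - Z₊)/2⌉`.
-/

/-- `S` is a union of connected components of `H`. -/
def IsAdjClosed (H : SimpleGraph V) (S : Set V) : Prop :=
  ∀ ⦃a b⦄, a ∈ S → H.Adj a b → b ∈ S

namespace IsAdjClosed

variable {H : SimpleGraph V} {S : Set V}

lemma compl (hS : IsAdjClosed H S) : IsAdjClosed H Sᶜ :=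
  fun _ _ ha hab hb => ha (hS hb hab.symm)

lemma mem_of_reachable (hS : IsAdjClosed H S) {a b : V} (ha : a ∈ S) (h : H.Reachable a b) :
    b ∈ S := by
  obtain ⟨p⟩ := h
  induction p with
  | nil => exact ha
  | cons hadj _ ih => exact ih (hS ha hadj)

end IsAdjClosed

section Forcing

variable {G : SimpleGraph V} {B B' : Set V} {u v w : V}

lemma delVerts_adj : (delVerts G B).Adj u v ↔ G.Adj u v ∧ u ∉ B ∧ v ∉ B := Iff.rfl

lemma delVerts_anti : Antitone (delVerts G) :=
  fun _ _ h _ _ ⟨hab, ha, hb⟩ => ⟨hab, fun h' => ha (h h'), fun h' => hb (h h')⟩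

lemma isAdjClosed_compl : IsAdjClosed (delVerts G B) Bᶜ :=
  fun _ _ _ hab => (delVerts_adj.1 hab).2.2

lemma IsAdjClosed.reachable_delVerts {S D : Set V} (hS : IsAdjClosed (delVerts G B) S)
    (hSD : Disjoint S D) {x y : V} (hy : y ∈ S) (h : (delVerts G B).Reachable y x) :
    (delVerts G D).Reachable y x := by
  obtain ⟨p⟩ := h
  induction p with
  | nil => rfl
  | cons hadj _ ih =>
    have hb := hS hy hadj
    exact (delVerts_adj.2 ⟨(delVerts_adj.1 hadj).1, hSD.notMem_of_mem_left hy,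
      hSD.notMem_of_mem_left hb⟩).reachable.trans (ih hb)

lemma mem_compOf_self (hv : v ∉ B) : v ∈ compOf G B v := ⟨hv, .rfl⟩

lemma compOf_subset_compl : compOf G B v ⊆ Bᶜ := fun _ hx => hx.1

lemma notMem_of_mem_compOf (hw : w ∈ compOf G B v) : v ∉ B :=
  isAdjClosed_compl.mem_of_reachable hw.1 hw.2

lemma isAdjClosed_compOf : IsAdjClosed (delVerts G B) (compOf G B v) :=
  fun _ _ ha hab => ⟨(delVerts_adj.1 hab).2.2, hab.symm.reachable.trans ha.2⟩

lemma IsAdjClosed.compOf_subset {S : Set V} (hS : IsAdjClosed (delVerts G B) S) (hv : v ∈ S) :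
    compOf G B v ⊆ S :=
  fun _ hx => hS.mem_of_reachable hv hx.2.symm

lemma compOf_insert_subset : compOf G (insert w B) v ⊆ compOf G B v \ {w} :=
  fun _ hx => ⟨⟨fun h => hx.1 (mem_insert_of_mem _ h),
    hx.2.mono (delVerts_anti (subset_insert _ _))⟩, fun h => hx.1 (h ▸ mem_insert _ _)⟩

lemma PSDForce.mono (hf : PSDForce G B u w) (h : B ⊆ B') (hw : w ∉ B') : PSDForce G B' u w :=
  ⟨h hf.1, hw, hf.2.2.1, fun x hadj hx hxw =>
    hf.2.2.2 x hadj (fun hxB => hx (h hxB)) (hxw.mono (delVerts_anti h))⟩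

lemma psdForce_of_forall_adj_eq (hu : u ∈ B) (hw : w ∈ compOf G B v) (hadj : G.Adj u w)
    (huniq : ∀ y ∈ compOf G B v, G.Adj u y → y = w) : PSDForce G B u w :=
  ⟨hu, hw.1, hadj, fun x hx hxB hxw => huniq x ⟨hxB, hxw.trans hw.2⟩ hx⟩

lemma subset_psdStep (B : Set V) : B ⊆ psdStep G B := subset_union_left

lemma psdStep_mono : Monotone (psdStep G) := by
  rintro B B' h w (hw | ⟨u, hu⟩)
  · exact Or.inl (h hw)
  · by_cases hwB : w ∈ B'
    exacts [Or.inl hwB, Or.inr ⟨u, hu.mono h hwB⟩]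

lemma subset_iterate_psdStep (t : ℕ) (B : Set V) : B ⊆ (psdStep G)^[t] B :=
  Function.id_le_iterate_of_id_le subset_psdStep t B

lemma IsPSDForcingSet.of_subset_psdStep (hB : IsPSDForcingSet G B) (h : B ⊆ psdStep G B') :
    IsPSDForcingSet G B' := by
  obtain ⟨t, ht⟩ := hB
  refine ⟨t + 1, eq_univ_of_univ_subset ?_⟩
  rw [Function.iterate_succ_apply, ← ht]
  exact psdStep_mono.iterate t h

lemma IsPSDForcingSet.mono (hB : IsPSDForcingSet G B) (h : B ⊆ B') : IsPSDForcingSet G B' :=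
  hB.of_subset_psdStep (h.trans (subset_psdStep B'))

lemma disjoint_compOf_iterate_psdStep
    (hC : ∀ u ∈ B, ∀ w ∈ compOf G B v, G.Adj u w → ∃ y ∈ compOf G B v, G.Adj u y ∧ y ≠ w)
    (t : ℕ) : Disjoint (compOf G B v) ((psdStep G)^[t] B) := by
  induction t with
  | zero => exact (disjoint_compl_left (a := B)).mono_left compOf_subset_compl
  | succ t ih =>
    rw [Function.iterate_succ_apply', disjoint_right]
    rintro x (hx | ⟨u, hu, -, hux, huniq⟩) hxC
    · exact ih.notMem_of_mem_right hx hxC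
    have huB : u ∈ B := by
      by_contra huB
      exact ih.notMem_of_mem_right hu (isAdjClosed_compOf hxC (delVerts_adj.2
        ⟨hux.symm, hxC.1, huB⟩))
    obtain ⟨y, hyC, huy, hyx⟩ := hC u huB x hxC hux
    exact hyx (huniq y huy (ih.notMem_of_mem_left hyC)
      (isAdjClosed_compOf.reachable_delVerts ih hyC (hyC.2.trans hxC.2.symm)))

lemma IsPSDForcingSet.exists_forall_adj_eq (hB : IsPSDForcingSet G B) (hv : v ∉ B) :
    ∃ u ∈ B, ∃ w ∈ compOf G B v, G.Adj u w ∧ ∀ y ∈ compOf G B v, G.Adj u y → y = w := by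
  by_contra! hC
  obtain ⟨t, ht⟩ := hB
  have := disjoint_compOf_iterate_psdStep hC t
  rw [ht, disjoint_univ] at this
  exact this.subset (mem_compOf_self hv)

lemma IsPSDForcingSet.mem_iterate_psdStep [Finite V] {m : ℕ} (hB : IsPSDForcingSet G B)
    (hm : (compOf G B v).ncard ≤ m) : v ∈ (psdStep G)^[m] B := by
  induction m generalizing B with
  | zero =>
    show v ∈ B
    by_contra hv
    have := (ncard_pos (s := compOf G B v)).2 ⟨v, mem_compOf_self hv⟩
    omega
  | succ m ih =>
    by_cases hv : v ∈ B
    · exact subset_iterate_psdStep _ B hv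
    obtain ⟨u, hu, w, hw, hadj, huniq⟩ := hB.exists_forall_adj_eq hv
    have hwB : insert w B ⊆ psdStep G B :=
      insert_subset (Or.inr ⟨u, psdForce_of_forall_adj_eq hu hw hadj huniq⟩) (subset_psdStep B)
    have hcard : (compOf G (insert w B) v).ncard ≤ m := by
      have := (ncard_le_ncard compOf_insert_subset).trans_lt (ncard_sdiff_singleton_lt_of_mem hw)
      omega
    rw [Function.iterate_succ_apply]
    exact psdStep_mono.iterate m hwB (ih (hB.mono (subset_insert w B)) hcard)

lemma IsPSDForcingSet.psdPropTime_le [Finite V] {m : ℕ} (hB : IsPSDForcingSet G B)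
    (hm : ∀ v, (compOf G B v).ncard ≤ m) : psdPropTime G B ≤ m :=
  Nat.sInf_le (eq_univ_of_forall fun v => hB.mem_iterate_psdStep (hm v))

end Forcing

section Exchange

variable {G : SimpleGraph V} {B : Set V} {u v w : V}

lemma isAdjClosed_compOf_sdiff_exchange (huniq : ∀ y ∈ compOf G B v, G.Adj u y → y = w) :
    IsAdjClosed (delVerts G (insert w (B \ {u}))) (compOf G B v \ {w}) := by
  rintro a b ⟨haC, haw⟩ hab
  obtain ⟨hG, -, hb⟩ := delVerts_adj.1 hab
  have hbu : b ≠ u := by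
    rintro rfl
    exact haw (huniq a haC hG.symm)
  have hbB : b ∉ B := fun h => hb (mem_insert_of_mem _ ⟨h, hbu⟩)
  exact ⟨isAdjClosed_compOf haC (delVerts_adj.2 ⟨hG, haC.1, hbB⟩),
    fun h => hb (h ▸ mem_insert _ _)⟩

lemma psdForce_exchange (hu : u ∈ B) (hw : w ∈ compOf G B v) (hadj : G.Adj u w)
    (huniq : ∀ y ∈ compOf G B v, G.Adj u y → y = w) : PSDForce G (insert w (B \ {u})) w u := by
  have huw : u ≠ w := fun h => hw.1 (h ▸ hu)
  refine ⟨mem_insert _ _, ?_, hadj.symm, fun y hwy hyB' hyu => ?_⟩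
  · rintro (h | ⟨-, h⟩)
    exacts [huw h, h rfl]
  by_contra hyu'
  have hyB : y ∉ B := fun h => hyB' (mem_insert_of_mem _ ⟨h, hyu'⟩)
  have hyC : y ∈ compOf G B v \ {w} :=
    ⟨isAdjClosed_compOf hw (delVerts_adj.2 ⟨hwy, hw.1, hyB⟩), fun h => hyB' (h ▸ mem_insert _ _)⟩
  exact ((isAdjClosed_compOf_sdiff_exchange huniq).mem_of_reachable hyC hyu).1.1 hu

lemma IsPSDForcingSet.exchange (hB : IsPSDForcingSet G B) (hu : u ∈ B) (hw : w ∈ compOf G B v)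
    (hadj : G.Adj u w) (huniq : ∀ y ∈ compOf G B v, G.Adj u y → y = w) :
    IsPSDForcingSet G (insert w (B \ {u})) := by
  refine hB.of_subset_psdStep fun b hb => ?_
  by_cases hbu : b = u
  · subst hbu
    exact Or.inr ⟨w, psdForce_exchange hu hw hadj huniq⟩
  · exact subset_psdStep _ (mem_insert_of_mem _ ⟨hb, hbu⟩)

lemma ncard_compOf_exchange_le [Finite V] (hw : w ∈ compOf G B v)
    (huniq : ∀ y ∈ compOf G B v, G.Adj u y → y = w) (x : V) :
    (compOf G (insert w (B \ {u})) x).ncard ≤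
      max ((compOf G B v).ncard - 1) (Bᶜ.ncard - (compOf G B v).ncard + 1) := by
  have hS := isAdjClosed_compOf_sdiff_exchange huniq
  by_cases hx : x ∈ compOf G B v \ {w}
  · refine le_max_of_le_left ?_
    rw [← ncard_sdiff_singleton_of_mem hw]
    exact ncard_le_ncard (hS.compOf_subset hx)
  · refine le_max_of_le_right ?_
    have hsub : compOf G (insert w (B \ {u})) x ⊆ insert u (Bᶜ \ compOf G B v) := by
      intro y hy
      have hyS := hS.compl.compOf_subset hx hy
      have hyB' := compOf_subset_compl hy
      simp only [mem_compl_iff, mem_sdiff, mem_singleton_iff, mem_insert_iff] at hyS hyB' ⊢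
      tauto
    rw [← ncard_sdiff compOf_subset_compl]
    exact (ncard_le_ncard hsub).trans (ncard_insert_le _ _)

lemma IsPSDForcingSet.exists_exchange [Finite V] {M : ℕ} (hB : IsPSDForcingSet G B)
    (hM : ∀ x, (compOf G B x).ncard ≤ M + 1)
    (hv : (Nat.card V - B.ncard + 1) / 2 < (compOf G B v).ncard) :
    ∃ B', IsPSDForcingSet G B' ∧ B'.ncard = B.ncard ∧ ∀ x, (compOf G B' x).ncard ≤ M := by
  have hvB : v ∉ B := by
    obtain ⟨y, hy⟩ := (ncard_pos (s := compOf G B v)).1 (by omega)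
    exact notMem_of_mem_compOf hy
  obtain ⟨u, hu, w, hw, hadj, huniq⟩ := hB.exists_forall_adj_eq hvB
  have hvM := hM v
  refine ⟨_, hB.exchange hu hw hadj huniq, ncard_exchange hw.1 hu,
    fun x => (ncard_compOf_exchange_le hw huniq x).trans (max_le ?_ ?_)⟩
  · omega
  · have hC : (compOf G B v).ncard ≤ Bᶜ.ncard := ncard_le_ncard compOf_subset_compl
    rw [ncard_compl] at hC ⊢
    omega

lemma IsPSDForcingSet.exists_ncard_compOf_le [Finite V] (hB : IsPSDForcingSet G B) :
    ∃ B', IsPSDForcingSet G B' ∧ B'.ncard = B.ncard ∧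
      ∀ x, (compOf G B' x).ncard ≤ (Nat.card V - B.ncard + 1) / 2 := by
  obtain ⟨M, hM⟩ : ∃ M, ∀ x, (compOf G B x).ncard ≤ M := ⟨_, fun x => ncard_le_card _⟩
  induction M generalizing B with
  | zero => exact ⟨B, hB, rfl, fun x => (hM x).trans (Nat.zero_le _)⟩
  | succ M ih =>
    by_cases hsmall : ∀ x, (compOf G B x).ncard ≤ (Nat.card V - B.ncard + 1) / 2
    · exact ⟨B, hB, rfl, hsmall⟩
    push Not at hsmall
    obtain ⟨v, hv⟩ := hsmall
    obtain ⟨B', hB', hcard, hM'⟩ := hB.exists_exchange hM hv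
    obtain ⟨B'', hB'', hcard', hsmall⟩ := ih hB' hM'
    exact ⟨B'', hB'', hcard'.trans hcard, hcard ▸ hsmall⟩

end Exchange

section PSDZ

variable (G : SimpleGraph V)

lemma exists_isPSDForcingSet_ncard_eq_psdZ : ∃ B, IsPSDForcingSet G B ∧ B.ncard = psdZ G :=
  Nat.sInf_mem (s := {k | ∃ B : Set V, IsPSDForcingSet G B ∧ B.ncard = k})
    ⟨_, univ, ⟨0, rfl⟩, rfl⟩

lemma psdPtG_le_psdPropTime {B : Set V} (hB : IsPSDForcingSet G B) (hcard : B.ncard = psdZ G) :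
    psdPtG G ≤ psdPropTime G B :=
  Nat.sInf_le ⟨B, hB, hcard, rfl⟩

lemma psdStep_empty : psdStep G ∅ = ∅ := by
  ext x
  simp [psdStep, PSDForce]

lemma not_isPSDForcingSet_empty [Nonempty V] : ¬ IsPSDForcingSet G ∅ := by
  rintro ⟨t, ht⟩
  rw [Function.iterate_fixed (psdStep_empty G)] at ht
  exact empty_ne_univ ht

lemma psdZ_pos [Finite V] [Nonempty V] : 0 < psdZ G := by
  obtain ⟨B, hB, hcard⟩ := exists_isPSDForcingSet_ncard_eq_psdZ G
  refine Nat.pos_of_ne_zero fun h => not_isPSDForcingSet_empty G ?_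
  rwa [← (ncard_eq_zero).1 (hcard.trans h)]

end PSDZ

theorem stmt6_general [Fintype V] (G : SimpleGraph V) :
    psdPtG G ≤ (Fintype.card V - psdZ G + 1) / 2 ∧
    (Fintype.card V - psdZ G + 1) / 2 ≤ (Fintype.card V - 1 + 1) / 2 ∧
    (((Fintype.card V - 1 + 1) / 2 : ℕ) : ℝ) ≤ (Fintype.card V : ℝ) / 2 := by
  obtain ⟨B₀, hB₀, hB₀card⟩ := exists_isPSDForcingSet_ncard_eq_psdZ G
  obtain ⟨B, hB, hcard, hcomp⟩ := hB₀.exists_ncard_compOf_le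
  rw [hB₀card, Nat.card_eq_fintype_card] at hcomp
  refine ⟨(psdPtG_le_psdPropTime G hB (hcard.trans hB₀card)).trans (hB.psdPropTime_le hcomp),
    ?_, ?_⟩
  · have : Fintype.card V = 0 ∨ 0 < psdZ G := by
      rcases isEmpty_or_nonempty V with hV | hV
      exacts [Or.inl Fintype.card_eq_zero, Or.inr (psdZ_pos G)]
    omega
  · rw [show (Fintype.card V - 1 + 1) / 2 = Fintype.card V / 2 by omega]
    exact Nat.cast_div_le

/-- `pt_+(G) ≤ ⌈(n - Z_+(G))/2⌉ ≤ ⌈(n-1)/2⌉ ≤ n/2`. -/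
theorem stmt6 [Fintype V] [Nonempty V] (G : SimpleGraph V) :
    psdPtG G ≤ (Fintype.card V - psdZ G + 1) / 2 ∧
    (Fintype.card V - psdZ G + 1) / 2 ≤ (Fintype.card V - 1 + 1) / 2 ∧
    (((Fintype.card V - 1 + 1) / 2 : ℕ) : ℝ) ≤ (Fintype.card V : ℝ) / 2 :=
  stmt6_general G
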